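/- arXiv:2208.11323 — 5 statements merged into one kernel-verified Lean document; each statement's English description precedes it below -/
import Mathlib

section
/- Define G_{N,t}(x) := (t/log N) ∫_0^t exp(−((t−s)t/s) · (x²/N²)) ds/s for N > 1, t > 0 and x ∈ ℝ∖{0}. Then for every t > 0 and every x ∈ ℝ∖{0}, sup_{N ≥ e} G_{N,t}(x) ≤ 7 · t · log_+(1/t) · log_+(1/|x|). -/
/-- `G_{N,t}(x) = (t / log N) ∫_0^t exp(-((t-s)t/s) x²/N²) ds/s`. -/
noncomputable def G (N t x : ℝ) : ℝ :=
  (t / Real.log N) *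
    ∫ s in Set.Ioo (0 : ℝ) t, Real.exp (-((t - s) * t / s) * (x ^ 2 / N ^ 2)) / s

/-- `log₊ w = log (e + w)`. -/
noncomputable def logPlus (w : ℝ) : ℝ := Real.log (Real.exp 1 + w)

lemma exp_neg_le (y : ℝ) (hy : 0 < y) : Real.exp (-y) ≤ 1 / (Real.exp 1 * y) := by
  have h1 : y ≤ Real.exp (y - 1) := by
    have := Real.add_one_le_exp (y - 1); linarith
  have h2 : Real.exp 1 * y ≤ Real.exp y := by
    calc Real.exp 1 * y ≤ Real.exp 1 * Real.exp (y - 1) := by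
          have := Real.exp_pos 1; nlinarith
      _ = Real.exp y := by rw [← Real.exp_add]; ring_nf
  rw [Real.exp_neg, one_div]
  exact inv_anti₀ (by positivity) h2

set_option maxHeartbeats 1000000 in
/-- For every `t > 0` and `x ≠ 0`, `sup_{N ≥ e} G_{N,t}(x) ≤ 7 t log₊(1/t) log₊(1/|x|)`. -/
theorem stmt_4 (t x : ℝ) (ht : 0 < t) (hx : x ≠ 0) :
    ∀ N : ℝ, Real.exp 1 ≤ N → G N t x ≤ 7 * t * logPlus (1 / t) * logPlus (1 / |x|) := by
  intro N hN
  have he : (0:ℝ) < Real.exp 1 := Real.exp_pos 1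
  have he2 : (2:ℝ) ≤ Real.exp 1 := by
    have := Real.add_one_le_exp (1:ℝ); linarith
  have hN0 : 0 < N := lt_of_lt_of_le he hN
  have hlogN : 1 ≤ Real.log N := by
    rw [show (1:ℝ) = Real.log (Real.exp 1) from (Real.log_exp 1).symm]
    exact Real.log_le_log he hN
  have hxa : 0 < |x| := abs_pos.mpr hx
  have hx2 : 0 < x ^ 2 := by positivity
  obtain ⟨a, ha⟩ : ∃ a : ℝ, a = t * x ^ 2 / N ^ 2 := ⟨_, rfl⟩
  have ha0 : 0 < a := by rw [ha]; positivity
  obtain ⟨s₀, hs₀def⟩ : ∃ s₀ : ℝ, s₀ = t * a / (1 + a) := ⟨_, rfl⟩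
  have h1a : 0 < 1 + a := by linarith
  have hs₀pos : 0 < s₀ := by rw [hs₀def]; positivity
  have hs₀lt : s₀ < t := by
    rw [hs₀def, div_lt_iff₀ h1a]; nlinarith
  obtain ⟨f, hf⟩ : ∃ f : ℝ → ℝ, f = fun s => Real.exp (-((t - s) * t / s) * (x ^ 2 / N ^ 2)) / s := ⟨_, rfl⟩
  have hfm : Measurable f := by
    rw [hf]
    apply Measurable.div
    · exact (measurable_const.sub measurable_id).mul_const _ |>.div measurable_id
        |>.neg.mul_const _ |>.exp
    · exact measurable_id
  have hfnn : ∀ s : ℝ, 0 < s → 0 ≤ f s := fun s hs => by rw [hf]; positivity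
  -- exponent rewrite
  have hexp : ∀ s : ℝ, 0 < s → -((t - s) * t / s) * (x ^ 2 / N ^ 2) = -(a * (t - s) / s) := by
    intro s hs
    rw [ha]
    field_simp
  obtain ⟨C, hC⟩ : ∃ C : ℝ, C = (1 + a) / (Real.exp 1 * a * t) := ⟨_, rfl⟩
  have hC0 : 0 < C := by rw [hC]; positivity
  -- bound on (0, s₀)
  have hb1 : ∀ s ∈ Set.Ioo (0:ℝ) s₀, f s ≤ C := by
    intro s hs
    obtain ⟨hs0, hss⟩ := hs
    have hts : 0 < t - s := by linarith
    have hy : 0 < a * (t - s) / s := by positivity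
    have h1 : f s ≤ (1 / (Real.exp 1 * (a * (t - s) / s))) / s := by
      have := exp_neg_le (a * (t - s) / s) hy
      rw [hf]
      simp only
      rw [hexp s hs0]
      exact div_le_div_of_nonneg_right this hs0.le
    refine h1.trans ?_
    have heq : (1 / (Real.exp 1 * (a * (t - s) / s))) / s = 1 / (Real.exp 1 * a * (t - s)) := by
      field_simp
    rw [heq, hC]
    rw [div_le_div_iff₀ (by positivity) (by positivity)]
    have h4 : s₀ * (1 + a) = t * a := by rw [hs₀def]; field_simp
    have h5 : s * (1 + a) < t * a := by
      calc s * (1 + a) < s₀ * (1 + a) := by nlinarith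
        _ = t * a := h4
    nlinarith [mul_pos he ha0, mul_pos (mul_pos he ha0) ht]
  -- bound on [s₀, t)
  have hb2 : ∀ s ∈ Set.Ico s₀ t, f s ≤ 1 / s := by
    intro s hs
    obtain ⟨hs1, hs2⟩ := hs
    have hs0 : 0 < s := lt_of_lt_of_le hs₀pos hs1
    have harg : -((t - s) * t / s) * (x ^ 2 / N ^ 2) ≤ 0 := by
      have h1 : 0 ≤ (t - s) * t / s := div_nonneg (mul_nonneg (by linarith) ht.le) hs0.le
      have h2 : 0 ≤ x ^ 2 / N ^ 2 := by positivity
      nlinarith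
    have hle : Real.exp (-((t - s) * t / s) * (x ^ 2 / N ^ 2)) ≤ 1 :=
      Real.exp_le_one_iff.mpr harg
    rw [hf]
    exact div_le_div_of_nonneg_right hle hs0.le
  -- integrability
  have hi1 : MeasureTheory.IntegrableOn f (Set.Ioo 0 s₀) := by
    apply MeasureTheory.Measure.integrableOn_of_bounded (M := C)
    · simp [Real.volume_Ioo]
    · exact hfm.aestronglyMeasurable
    · rw [MeasureTheory.ae_restrict_iff' measurableSet_Ioo]
      filter_upwards with s hs
      rw [Real.norm_eq_abs, abs_of_nonneg (hfnn s hs.1)]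
      exact hb1 s hs
  have hi2 : MeasureTheory.IntegrableOn f (Set.Ico s₀ t) := by
    apply MeasureTheory.Measure.integrableOn_of_bounded (M := 1 / s₀)
    · simp [Real.volume_Ico]
    · exact hfm.aestronglyMeasurable
    · rw [MeasureTheory.ae_restrict_iff' measurableSet_Ico]
      filter_upwards with s hs
      have hs0 : 0 < s := lt_of_lt_of_le hs₀pos hs.1
      rw [Real.norm_eq_abs, abs_of_nonneg (hfnn s hs0)]
      exact (hb2 s hs).trans (one_div_le_one_div_of_le hs₀pos hs.1)
  -- split the integral
  have hdisj : Disjoint (Set.Ioo (0:ℝ) s₀) (Set.Ico s₀ t) :=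
    Set.disjoint_left.mpr (fun u hu1 hu2 => absurd hu2.1 (not_le.mpr hu1.2))
  have hsplit : ∫ s in Set.Ioo (0:ℝ) t, f s
      = (∫ s in Set.Ioo (0:ℝ) s₀, f s) + ∫ s in Set.Ico s₀ t, f s := by
    rw [← Set.Ioo_union_Ico_eq_Ioo hs₀pos hs₀lt.le]
    exact MeasureTheory.setIntegral_union hdisj measurableSet_Ico hi1 hi2
  -- bound piece 1
  have hp1 : (∫ s in Set.Ioo (0:ℝ) s₀, f s) ≤ 1 / Real.exp 1 := by
    have h1 : (∫ s in Set.Ioo (0:ℝ) s₀, f s) ≤ ∫ _ in Set.Ioo (0:ℝ) s₀, C := by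
      apply MeasureTheory.setIntegral_mono_on hi1 (MeasureTheory.integrableOn_const
        (by simp [Real.volume_Ioo])) measurableSet_Ioo hb1
    refine h1.trans ?_
    rw [MeasureTheory.setIntegral_const, Real.volume_real_Ioo_of_le hs₀pos.le, smul_eq_mul]
    have heq : (s₀ - 0) * C = 1 / Real.exp 1 := by
      rw [hC, hs₀def, sub_zero]
      field_simp
    exact le_of_eq heq
  -- bound piece 2
  have hp2 : (∫ s in Set.Ico s₀ t, f s) ≤ Real.log (t / s₀) := by
    have h1 : (∫ s in Set.Ico s₀ t, f s) ≤ ∫ s in Set.Ico s₀ t, 1 / s := by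
      apply MeasureTheory.setIntegral_mono_on hi2 ?_ measurableSet_Ico hb2
      apply MeasureTheory.Measure.integrableOn_of_bounded (M := 1 / s₀)
      · simp [Real.volume_Ico]
      · exact (measurable_const.div measurable_id).aestronglyMeasurable
      · rw [MeasureTheory.ae_restrict_iff' measurableSet_Ico]
        filter_upwards with s hs
        have hs0 : 0 < s := lt_of_lt_of_le hs₀pos hs.1
        rw [Real.norm_eq_abs, abs_of_nonneg (by positivity)]
        exact one_div_le_one_div_of_le hs₀pos hs.1
    refine h1.trans ?_
    have h2 : (∫ s in Set.Ico s₀ t, 1 / s) = ∫ s in s₀..t, 1 / s := by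
      rw [intervalIntegral.integral_of_le hs₀lt.le]
      exact MeasureTheory.setIntegral_congr_set MeasureTheory.Ico_ae_eq_Ioc
    rw [h2, integral_one_div (by
      intro hmem
      rw [Set.mem_uIcc] at hmem
      rcases hmem with ⟨h1, _⟩ | ⟨h1, _⟩ <;> linarith)]
  -- bound the log term
  obtain ⟨L1, hL1def⟩ : ∃ L : ℝ, L = logPlus (1 / t) := ⟨_, rfl⟩
  obtain ⟨L2, hL2def⟩ : ∃ L : ℝ, L = logPlus (1 / |x|) := ⟨_, rfl⟩
  have hL1 : 1 ≤ L1 := by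
    rw [hL1def, logPlus]
    calc (1:ℝ) = Real.log (Real.exp 1) := (Real.log_exp 1).symm
      _ ≤ _ := Real.log_le_log he (le_add_of_nonneg_right (by positivity))
  have hL2 : 1 ≤ L2 := by
    rw [hL2def, logPlus]
    calc (1:ℝ) = Real.log (Real.exp 1) := (Real.log_exp 1).symm
      _ ≤ _ := Real.log_le_log he (le_add_of_nonneg_right (by positivity))
  have hN1 : (1:ℝ) ≤ N := le_trans (by linarith) hN
  have hlog : Real.log (t / s₀) ≤ 2 * Real.log N + L1 + 2 * L2 := by
    have hts : t / s₀ = (t * x ^ 2 + N ^ 2) / (t * x ^ 2) := by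
      rw [hs₀def, ha]; field_simp; ring
    have hxx : x ^ 2 = |x| ^ 2 := (sq_abs x).symm
    have hrhs : N ^ 2 * (Real.exp 1 + 1 / t) * (Real.exp 1 + 1 / |x|) ^ 2
        = N ^ 2 * (Real.exp 1 * t + 1) * (Real.exp 1 * |x| + 1) ^ 2 / (t * x ^ 2) := by
      rw [hxx]; field_simp
    have hN2 : (1:ℝ) ≤ N ^ 2 := by nlinarith
    have hstep1 : t * x ^ 2 + N ^ 2 ≤ N ^ 2 * (t * x ^ 2 + 1) := by
      nlinarith [mul_nonneg (sub_nonneg.mpr hN2) (mul_pos ht hx2).le]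
    have hstep2 : t * x ^ 2 + 1 ≤ (Real.exp 1 * t + 1) * (Real.exp 1 * |x| + 1) ^ 2 := by
      rw [hxx]
      have hE3 : (1:ℝ) ≤ Real.exp 1 * Real.exp 1 * Real.exp 1 := by nlinarith
      nlinarith [mul_nonneg (sub_nonneg.mpr hE3) (mul_pos ht (mul_pos hxa hxa)).le,
        mul_nonneg (mul_nonneg (mul_nonneg he.le he.le) ht.le) hxa.le,
        mul_nonneg he.le ht.le,
        mul_nonneg (mul_nonneg he.le he.le) (mul_nonneg hxa.le hxa.le),
        mul_nonneg he.le hxa.le]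
    have hpoly : t * x ^ 2 + N ^ 2
        ≤ N ^ 2 * (Real.exp 1 * t + 1) * (Real.exp 1 * |x| + 1) ^ 2 := by
      calc t * x ^ 2 + N ^ 2 ≤ N ^ 2 * (t * x ^ 2 + 1) := hstep1
        _ ≤ N ^ 2 * ((Real.exp 1 * t + 1) * (Real.exp 1 * |x| + 1) ^ 2) := by
            have hN2 : (0:ℝ) ≤ N ^ 2 := by positivity
            exact mul_le_mul_of_nonneg_left hstep2 hN2
        _ = N ^ 2 * (Real.exp 1 * t + 1) * (Real.exp 1 * |x| + 1) ^ 2 := by ring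
    have hmain : t / s₀ ≤ N ^ 2 * (Real.exp 1 + 1 / t) * (Real.exp 1 + 1 / |x|) ^ 2 := by
      rw [hts, hrhs]
      exact div_le_div_of_nonneg_right hpoly (by positivity)
    have hlog1 : Real.log (t / s₀)
        ≤ Real.log (N ^ 2 * (Real.exp 1 + 1 / t) * (Real.exp 1 + 1 / |x|) ^ 2) :=
      Real.log_le_log (by positivity) hmain
    refine hlog1.trans_eq ?_
    rw [Real.log_mul (by positivity) (by positivity), Real.log_mul (by positivity) (by positivity),
      Real.log_pow, Real.log_pow, hL1def, hL2def, logPlus, logPlus]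
    push_cast
    ring
  -- put it together
  have hI : (∫ s in Set.Ioo (0:ℝ) t, f s) ≤ 2 * Real.log N + L1 + 2 * L2 + 1 := by
    have h1e : 1 / Real.exp 1 ≤ 1 := by
      rw [div_le_one he]; linarith
    rw [hsplit]
    have := hp2.trans hlog
    linarith
  rw [G, ← hf]
  have htlog : 0 < t / Real.log N := by positivity
  have hlog0 : Real.log N ≠ 0 := by linarith
  calc (t / Real.log N) * ∫ s in Set.Ioo (0:ℝ) t, f s
      ≤ (t / Real.log N) * (2 * Real.log N + L1 + 2 * L2 + 1) := by
        exact mul_le_mul_of_nonneg_left hI htlog.le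
    _ = 2 * t + (t * (L1 + 2 * L2 + 1)) / Real.log N := by
        field_simp
        ring
    _ ≤ 2 * t + t * (L1 + 2 * L2 + 1) := by
        have h0 : 0 ≤ t * (L1 + 2 * L2 + 1) := by nlinarith
        have := div_le_self h0 hlogN
        linarith
    _ ≤ 7 * t * L1 * L2 := by
        nlinarith [mul_nonneg (mul_nonneg ht.le (sub_nonneg.mpr hL1)) (sub_nonneg.mpr hL2),
          mul_nonneg ht.le (sub_nonneg.mpr hL1), mul_nonneg ht.le (sub_nonneg.mpr hL2)]
    _ = 7 * t * logPlus (1 / t) * logPlus (1 / |x|) := by rw [hL1def, hL2def]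
end

section
/- Define G_{N,t}(x) := (t/log N) ∫_0^t exp(−((t−s)t/s) · (x²/N²)) ds/s for N > 1, t > 0 and x ∈ ℝ∖{0}. Then for every t > 0 and every x ∈ ℝ∖{0}, lim_{N→∞} G_{N,t}(x) = 2t. -/
open MeasureTheory Set

lemma log_int (a b : ℝ) (ha : 0 < a) (hab : a ≤ b) :
    ∫ s in Set.Ioo a b, 1/s = Real.log (b/a) := by
  rw [← integral_Ioc_eq_integral_Ioo, ← intervalIntegral.integral_of_le hab]
  exact integral_one_div (by simp [Set.uIcc_of_le hab]; intro h; linarith)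

lemma exp_neg_le_inv {u : ℝ} (hu : 0 < u) : Real.exp (-u) ≤ u⁻¹ := by
  rw [Real.exp_neg]
  exact inv_anti₀ hu (le_trans (by linarith) (Real.add_one_le_exp u))

lemma Ibounds (t x N : ℝ) (ht : 0 < t) (hx : x ≠ 0) (hN : 2 ≤ N)
    (hε : t^2*x^2/N^2 ≤ t/2) :
    Real.log t - Real.log (t^2*x^2/N^2) - 1
      ≤ (∫ s in Set.Ioo (0:ℝ) t, Real.exp (-((t - s) * t / s) * (x ^ 2 / N ^ 2)) / s) ∧
    (∫ s in Set.Ioo (0:ℝ) t, Real.exp (-((t - s) * t / s) * (x ^ 2 / N ^ 2)) / s)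
      ≤ Real.log t - Real.log (t^2*x^2/N^2) + 2 := by
  set f : ℝ → ℝ := fun s => Real.exp (-((t - s) * t / s) * (x ^ 2 / N ^ 2)) / s with hf
  set ε : ℝ := t^2*x^2/N^2 with hεdef
  have hN0 : (0:ℝ) < N := by linarith
  have hε0 : 0 < ε := by rw [hεdef]; positivity
  have hεt : ε < t := lt_of_le_of_lt hε (by linarith)
  clear_value ε
  have hmeas : Measurable f :=
    (Real.measurable_exp.comp
      (((((measurable_const.sub measurable_id).mul measurable_const).div
          measurable_id).neg).mul measurable_const)).div measurable_id
  have hexp_le : ∀ s : ℝ, 0 < s → ((t - s) * t / s) * (x ^ 2 / N ^ 2) ≤ ε / s := by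
    intro s hs
    rw [hεdef, div_mul_div_comm, div_div, div_le_div_iff₀ (by positivity) (by positivity)]
    nlinarith [mul_nonneg (mul_nonneg (sq_nonneg x) (sq_nonneg N)) hs.le,
      mul_nonneg (mul_nonneg (mul_nonneg hs.le ht.le) (sq_nonneg x)) (sq_nonneg N)]
  have hexp_ge : ∀ s : ℝ, 0 < s → s < ε → ε / (2*s) ≤ ((t - s) * t / s) * (x ^ 2 / N ^ 2) := by
    intro s hs hsε
    have hts : t / 2 ≤ t - s := by linarith [lt_of_lt_of_le hsε hε]
    rw [hεdef, div_mul_div_comm, div_div, div_le_div_iff₀ (by positivity) (by positivity)]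
    have h2 : t*t ≤ 2*((t-s)*t) := by nlinarith
    nlinarith [mul_le_mul_of_nonneg_right h2
      (show (0:ℝ) ≤ x^2*(N^2*s) by positivity)]
  have hfpos : ∀ s : ℝ, 0 < s → 0 < f s := fun s hs => div_pos (Real.exp_pos _) hs
  -- pointwise bound on (0, ε)
  have hbd1 : ∀ s ∈ Set.Ioo (0:ℝ) ε, f s ≤ 2/ε := by
    intro s hs
    have hnum : Real.exp (-((t - s) * t / s) * (x ^ 2 / N ^ 2)) ≤ 2*s/ε := by
      calc Real.exp (-((t - s) * t / s) * (x ^ 2 / N ^ 2))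
          ≤ Real.exp (-(ε/(2*s))) := by
            apply Real.exp_le_exp.mpr
            have := hexp_ge s hs.1 hs.2
            linarith
        _ ≤ (ε/(2*s))⁻¹ := exp_neg_le_inv (div_pos hε0 (by linarith [hs.1]))
        _ = 2*s/ε := inv_div _ _
    calc f s ≤ (2*s/ε)/s := div_le_div_of_nonneg_right hnum hs.1.le
      _ = 2/ε := by
          rw [div_div, mul_comm (2:ℝ) s, mul_comm ε s, mul_div_mul_left _ _ hs.1.ne']
  -- pointwise bound f ≤ 1/s on (0,t)
  have hbd2 : ∀ s ∈ Set.Ioo (0:ℝ) t, f s ≤ 1/s := by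
    intro s hs
    apply div_le_div_of_nonneg_right _ hs.1.le
    rw [Real.exp_le_one_iff, neg_mul, neg_nonpos]
    exact mul_nonneg (div_nonneg (mul_nonneg (by linarith [hs.2]) ht.le) hs.1.le)
      (by positivity)
  -- pointwise lower bound on (ε, t)
  have hbd3 : ∀ s ∈ Set.Ioo ε t, 1/s - ε * s^(-2:ℤ) ≤ f s := by
    intro s hs
    have hs0 : 0 < s := lt_trans hε0 hs.1
    have hnum : 1 - ε/s ≤ Real.exp (-((t - s) * t / s) * (x ^ 2 / N ^ 2)) := by
      have h1 := Real.add_one_le_exp (-(((t - s) * t / s) * (x ^ 2 / N ^ 2)))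
      have h2 := hexp_le s hs0
      rw [neg_mul]
      linarith
    calc 1/s - ε * s^(-2:ℤ) = (1 - ε/s)/s := by
          rw [show (s:ℝ)^(-2:ℤ) = (s^2)⁻¹ by rw [zpow_neg]; norm_cast]
          field_simp
      _ ≤ f s := div_le_div_of_nonneg_right hnum hs0.le
  -- integrability
  have hIεmeas : MeasurableSet (Set.Ioo (0:ℝ) ε) := measurableSet_Ioo
  have hint1 : IntegrableOn f (Set.Ioo 0 ε) := by
    apply Integrable.mono' (integrableOn_const (C := 2/ε) measure_Ioo_lt_top.ne)
      hmeas.aestronglyMeasurable.restrict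
    refine (ae_restrict_iff' hIεmeas).2 (ae_of_all _ fun s hs => ?_)
    rw [Real.norm_eq_abs, abs_of_pos (hfpos s hs.1)]
    exact hbd1 s hs
  have hint2 : IntegrableOn f (Set.Ico ε t) := by
    apply Integrable.mono' (integrableOn_const (C := 1/ε) measure_Ico_lt_top.ne)
      hmeas.aestronglyMeasurable.restrict
    refine (ae_restrict_iff' measurableSet_Ico).2 (ae_of_all _ fun s hs => ?_)
    have hs0 : 0 < s := lt_of_lt_of_le hε0 hs.1
    rw [Real.norm_eq_abs, abs_of_pos (hfpos s hs0)]
    calc f s ≤ 1/s := hbd2 s ⟨hs0, hs.2⟩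
      _ ≤ 1/ε := by apply div_le_div_of_nonneg_left one_pos.le hε0 hs.1 |>.trans_eq rfl
  have hsub : Set.Ioo (0:ℝ) t ⊆ Set.Ioo 0 ε ∪ Set.Ico ε t := by
    intro s hs
    rcases lt_or_ge s ε with h | h
    · exact Or.inl ⟨hs.1, h⟩
    · exact Or.inr ⟨h, hs.2⟩
  have hInt : IntegrableOn f (Set.Ioo 0 t) := (hint1.union hint2).mono_set hsub
  have hdisj : Disjoint (Set.Ioo 0 ε) (Set.Ico ε t) :=
    Set.disjoint_left.mpr fun s h1 h2 => absurd h2.1 (not_le.mpr h1.2)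
  have hlogεt : ∫ s in Set.Ioo ε t, 1/s = Real.log t - Real.log ε := by
    rw [log_int ε t hε0 hεt.le, Real.log_div ht.ne' hε0.ne']
  constructor
  · -- lower bound
    have hintg : IntegrableOn (fun s => 1/s - ε * s^(-2:ℤ)) (Set.Ioo ε t) := by
      apply (ContinuousOn.integrableOn_Icc ?_).mono_set Set.Ioo_subset_Icc_self
      apply ContinuousOn.sub
      · exact continuousOn_const.div continuousOn_id
          (fun s hs => (lt_of_lt_of_le hε0 hs.1).ne')
      · exact continuousOn_const.mul (continuousOn_id.zpow₀ _
          (fun s hs => Or.inl (lt_of_lt_of_le hε0 hs.1).ne'))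
    have h1 : ∫ s in Set.Ioo ε t, (1/s - ε * s^(-2:ℤ)) ≤ ∫ s in Set.Ioo ε t, f s :=
      setIntegral_mono_on hintg (hInt.mono_set (Set.Ioo_subset_Ioo hε0.le le_rfl))
        measurableSet_Ioo hbd3
    have h2 : ∫ s in Set.Ioo ε t, f s ≤ ∫ s in Set.Ioo 0 t, f s := by
      apply setIntegral_mono_set hInt ?_
        (HasSubset.Subset.eventuallyLE (Set.Ioo_subset_Ioo hε0.le le_rfl))
      exact (ae_restrict_iff' measurableSet_Ioo).2 (ae_of_all _ fun s hs => (hfpos s hs.1).le)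
    have hval : ∫ s in Set.Ioo ε t, (1/s - ε * s^(-2:ℤ))
        = (Real.log t - Real.log ε) - ε * ((t^(-1:ℤ) - ε^(-1:ℤ))/(-1)) := by
      rw [← integral_Ioc_eq_integral_Ioo, ← intervalIntegral.integral_of_le hεt.le]
      have hz : (0:ℝ) ∉ Set.uIcc ε t := by
        simp [Set.uIcc_of_le hεt.le]; intro h; linarith
      have ha : IntervalIntegrable (fun s : ℝ => 1/s) volume ε t :=
        intervalIntegral.intervalIntegrable_one_div (fun s hs => by
          intro h; subst h; exact hz hs) (by fun_prop)
      have hb : IntervalIntegrable (fun s : ℝ => ε * s^(-2:ℤ)) volume ε t :=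
        (intervalIntegral.intervalIntegrable_zpow (Or.inr hz)).const_mul ε
      rw [intervalIntegral.integral_sub ha hb, intervalIntegral.integral_const_mul,
        integral_one_div hz, integral_zpow (Or.inr ⟨by norm_num, hz⟩),
        Real.log_div ht.ne' hε0.ne']
      norm_num
    have hfin : Real.log t - Real.log ε - 1
        ≤ (Real.log t - Real.log ε) - ε * ((t^(-1:ℤ) - ε^(-1:ℤ))/(-1)) := by
      have h3 : ε * ((t^(-1:ℤ) - ε^(-1:ℤ))/(-1)) = 1 - ε/t := by
        field_simp
        ring
      rw [h3]
      have : 0 ≤ ε/t := by positivity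
      linarith
    rw [hval] at h1
    linarith
  · -- upper bound
    have h0 : ∫ s in Set.Ioo 0 t, f s ≤ ∫ s in Set.Ioo 0 ε ∪ Set.Ico ε t, f s := by
      apply setIntegral_mono_set (hint1.union hint2) ?_
        (HasSubset.Subset.eventuallyLE hsub)
      refine (ae_restrict_iff' (hIεmeas.union measurableSet_Ico)).2
        (ae_of_all _ fun s hs => ?_)
      rcases hs with h | h
      · exact (hfpos s h.1).le
      · exact (hfpos s (lt_of_lt_of_le hε0 h.1)).le
    rw [setIntegral_union hdisj measurableSet_Ico hint1 hint2] at h0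
    have h1 : ∫ s in Set.Ioo 0 ε, f s ≤ 2 := by
      calc ∫ s in Set.Ioo 0 ε, f s ≤ ∫ _s in Set.Ioo 0 ε, (2/ε) :=
            setIntegral_mono_on hint1 (integrableOn_const measure_Ioo_lt_top.ne)
              hIεmeas hbd1
        _ = (volume (Set.Ioo (0:ℝ) ε)).toReal * (2/ε) := by
            rw [setIntegral_const]; rfl
        _ = 2 := by
            rw [Real.volume_Ioo, sub_zero, ENNReal.toReal_ofReal hε0.le]
            field_simp
    have h2 : ∫ s in Set.Ico ε t, f s ≤ Real.log t - Real.log ε := by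
      have hint1s : IntegrableOn (fun s => 1/s) (Set.Ico ε t) := by
        apply (ContinuousOn.integrableOn_Icc ?_).mono_set Set.Ico_subset_Icc_self
        exact continuousOn_const.div continuousOn_id
          (fun s hs => (lt_of_lt_of_le hε0 hs.1).ne')
      calc ∫ s in Set.Ico ε t, f s ≤ ∫ s in Set.Ico ε t, 1/s :=
            setIntegral_mono_on hint2 hint1s measurableSet_Ico
              (fun s hs => hbd2 s ⟨lt_of_lt_of_le hε0 hs.1, hs.2⟩)
        _ = ∫ s in Set.Ioo ε t, 1/s := integral_Ico_eq_integral_Ioo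
        _ = Real.log t - Real.log ε := hlogεt
    linarith

/-- For every `t > 0` and `x ≠ 0`, `G_{N,t}(x) → 2t` as `N → ∞`. -/
theorem stmt_5 (t x : ℝ) (ht : 0 < t) (hx : x ≠ 0) :
    Filter.Tendsto (fun N : ℝ => G N t x) Filter.atTop (nhds (2 * t)) := by
  have hlog : Filter.Tendsto (fun N : ℝ => (Real.log N)⁻¹) Filter.atTop (nhds 0) :=
    Real.tendsto_log_atTop.inv_tendsto_atTop
  have hL : Filter.Tendsto
      (fun N : ℝ => 2*t + (Real.log t - Real.log (t^2*x^2) - 1) * t * (Real.log N)⁻¹)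
      Filter.atTop (nhds (2*t)) := by
    have := (hlog.const_mul ((Real.log t - Real.log (t^2*x^2) - 1) * t)).const_add (2*t)
    simpa using this
  have hU : Filter.Tendsto
      (fun N : ℝ => 2*t + (Real.log t - Real.log (t^2*x^2) + 2) * t * (Real.log N)⁻¹)
      Filter.atTop (nhds (2*t)) := by
    have := (hlog.const_mul ((Real.log t - Real.log (t^2*x^2) + 2) * t)).const_add (2*t)
    simpa using this
  have htend : Filter.Tendsto (fun N : ℝ => t^2*x^2/N^2) Filter.atTop (nhds 0) := by
    have h1 := ((Filter.tendsto_pow_atTop (two_ne_zero : (2:ℕ) ≠ 0)).inv_tendsto_atTop :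
      Filter.Tendsto (fun N : ℝ => (N^2)⁻¹) Filter.atTop (nhds 0))
    have := h1.const_mul (t^2*x^2)
    simpa [div_eq_mul_inv] using this
  have hev : ∀ᶠ N : ℝ in Filter.atTop,
      (2*t + (Real.log t - Real.log (t^2*x^2) - 1) * t * (Real.log N)⁻¹ ≤ G N t x) ∧
      (G N t x ≤ 2*t + (Real.log t - Real.log (t^2*x^2) + 2) * t * (Real.log N)⁻¹) := by
    filter_upwards [Filter.eventually_ge_atTop (2:ℝ),
      htend.eventually (gt_mem_nhds (show (0:ℝ) < t/2 by linarith))] with N hN hεN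
    have hI := Ibounds t x N ht hx hN hεN.le
    have hlogN : 0 < Real.log N := Real.log_pos (by linarith)
    have hcoef : 0 ≤ t / Real.log N := div_nonneg ht.le hlogN.le
    have hlogε : Real.log (t^2*x^2/N^2) = Real.log (t^2*x^2) - 2*Real.log N := by
      rw [Real.log_div (by positivity) (by positivity), Real.log_pow]
      norm_num
    constructor
    · have h1 : 2*t + (Real.log t - Real.log (t^2*x^2) - 1) * t * (Real.log N)⁻¹
          = (t / Real.log N) * (Real.log t - Real.log (t^2*x^2/N^2) - 1) := by
        rw [hlogε]
        linear_combination (-2*t) * mul_inv_cancel₀ hlogN.ne'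
      rw [h1, G]
      exact mul_le_mul_of_nonneg_left hI.1 hcoef
    · have h1 : 2*t + (Real.log t - Real.log (t^2*x^2) + 2) * t * (Real.log N)⁻¹
          = (t / Real.log N) * (Real.log t - Real.log (t^2*x^2/N^2) + 2) := by
        rw [hlogε]
        linear_combination (-2*t) * mul_inv_cancel₀ hlogN.ne'
      rw [h1, G]
      exact mul_le_mul_of_nonneg_left hI.2 hcoef
  exact tendsto_of_tendsto_of_tendsto_of_le_of_le' hL hU
    (hev.mono fun N h => h.1) (hev.mono fun N h => h.2)
end

section
/- For every dimension d ≥ 1 and all m, n > 0, there exists a constant C > 0 such that |ψ_{m,n}(z)| ≤ C · min(1, ‖z‖^{−2}) for all z ∈ ℝ^d, where min(1, ‖z‖^{−2}) is interpreted as 1 when z = 0. -/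
open MeasureTheory
open scoped Classical

/-- `I_m(x) = m^{-d} 1_{[0,m]^d}(x)`. -/
noncomputable def Ibox (d : ℕ) (m : ℝ) (x : EuclideanSpace ℝ (Fin d)) : ℝ :=
  if ∀ j, x j ∈ Set.Icc (0 : ℝ) m then (m ^ d)⁻¹ else 0

/-- `Ĩ_m(x) = I_m(-x)`. -/
noncomputable def IboxTilde (d : ℕ) (m : ℝ) (x : EuclideanSpace ℝ (Fin d)) : ℝ :=
  Ibox d m (-x)

/-- Convolution on `ℝ^d` with respect to Lebesgue measure. -/
noncomputable def convE (d : ℕ) (g h : EuclideanSpace ℝ (Fin d) → ℝ)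
    (x : EuclideanSpace ℝ (Fin d)) : ℝ :=
  ∫ y, g (x - y) * h y

/-- `ψ_{m,n}(z) = ∫_{ℝ^d} (I_m ⋆ Ĩ_n)(x) e^{i z·x} dx`. -/
noncomputable def psiE (d : ℕ) (m n : ℝ) (z : EuclideanSpace ℝ (Fin d)) : ℂ :=
  ∫ x, (convE d (Ibox d m) (IboxTilde d n) x : ℂ) *
    Complex.exp (Complex.I * ((inner ℝ z x : ℝ) : ℂ))


noncomputable def fac (a c t : ℝ) : ℂ :=
  (if t ∈ Set.Icc (0:ℝ) a then ((a:ℂ))⁻¹ else 0) * Complex.exp (Complex.I * c * t)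

lemma abs_exp_I_mul (r : ℝ) : ‖Complex.exp (Complex.I * r)‖ = 1 := by
  rw [mul_comm, Complex.norm_exp_ofReal_mul_I]

lemma fac_integral (a c : ℝ) (ha : 0 ≤ a) :
    ∫ t : ℝ, fac a c t = (a:ℂ)⁻¹ * ∫ t in (0:ℝ)..a, Complex.exp (Complex.I * c * t) := by
  have h : (fun t : ℝ => fac a c t)
      = Set.indicator (Set.Icc (0:ℝ) a) (fun t => (a:ℂ)⁻¹ * Complex.exp (Complex.I * c * t)) := by
    funext t
    by_cases ht : t ∈ Set.Icc (0:ℝ) a <;> simp [fac, ht]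
  rw [h, integral_indicator measurableSet_Icc, MeasureTheory.integral_Icc_eq_integral_Ioc,
    MeasureTheory.integral_const_mul]
  congr 1
  rw [intervalIntegral.integral_of_le ha]

lemma abs_fac_integral_le_one (a c : ℝ) (ha : 0 < a) :
    ‖∫ t : ℝ, fac a c t‖ ≤ 1 := by
  rw [fac_integral a c ha.le, norm_mul]
  have h1 : ‖((a:ℂ))⁻¹‖ = a⁻¹ := by
    rw [norm_inv, Complex.norm_real, Real.norm_eq_abs, abs_of_pos ha]
  have h2 : ‖∫ t in (0:ℝ)..a, Complex.exp (Complex.I * c * t)‖ ≤ 1 * |a - 0| := by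
    apply intervalIntegral.norm_integral_le_of_norm_le_const
    intro t _
    rw [mul_assoc, ← Complex.ofReal_mul, abs_exp_I_mul]
  rw [h1]
  calc a⁻¹ * ‖∫ t in (0:ℝ)..a, Complex.exp (Complex.I * c * t)‖
      ≤ a⁻¹ * (1 * |a - 0|) := by
        exact mul_le_mul_of_nonneg_left h2 (by positivity)
    _ = 1 := by rw [sub_zero, abs_of_pos ha]; field_simp

lemma abs_fac_integral_le_decay (a c : ℝ) (ha : 0 < a) (hc : c ≠ 0) :
    ‖∫ t : ℝ, fac a c t‖ ≤ 2 / (a * |c|) := by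
  rw [fac_integral a c ha.le, norm_mul]
  have hIc : (Complex.I * c) ≠ 0 := by
    simp [Complex.I_ne_zero, Complex.ofReal_eq_zero, hc]
  have h2 : (∫ t in (0:ℝ)..a, Complex.exp (Complex.I * c * t))
      = (Complex.exp (Complex.I * c * a) - Complex.exp (Complex.I * c * 0)) / (Complex.I * c) := by
    exact integral_exp_mul_complex hIc
  rw [h2]
  have h1 : ‖((a:ℂ))⁻¹‖ = a⁻¹ := by
    rw [norm_inv, Complex.norm_real, Real.norm_eq_abs, abs_of_pos ha]
  rw [h1, norm_div, norm_mul, Complex.norm_I, Complex.norm_real, Real.norm_eq_abs, one_mul]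
  have e1 : ‖Complex.exp (Complex.I * c * a)‖ = 1 := by
    rw [mul_assoc, ← Complex.ofReal_mul, abs_exp_I_mul]
  have e0 : ‖Complex.exp (Complex.I * c * 0)‖ = 1 := by
    simp
  have hnum : ‖Complex.exp (Complex.I * c * a) - Complex.exp (Complex.I * c * 0)‖ ≤ 2 := by
    calc ‖Complex.exp (Complex.I * c * a) - Complex.exp (Complex.I * c * 0)‖
        ≤ ‖Complex.exp (Complex.I * c * a)‖ + ‖Complex.exp (Complex.I * c * 0)‖ :=
          by exact norm_sub_le (Complex.exp (Complex.I * c * a)) (Complex.exp (Complex.I * c * 0))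
      _ ≤ 2 := by rw [e1, e0]; norm_num
  have hc' : (0:ℝ) < |c| := abs_pos.mpr hc
  calc a⁻¹ * (‖Complex.exp (Complex.I * c * a) - Complex.exp (Complex.I * c * 0)‖ / |c|)
      ≤ a⁻¹ * (2 / |c|) := by gcongr
    _ = 2 / (a * |c|) := by field_simp


noncomputable def Ffun (d : ℕ) (a : ℝ) (z : EuclideanSpace ℝ (Fin d)) : ℂ :=
  ∫ x : EuclideanSpace ℝ (Fin d),
    (Ibox d a x : ℂ) * Complex.exp (Complex.I * ((inner ℝ z x : ℝ) : ℂ))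

lemma pointwise_prod (d : ℕ) (a : ℝ) (z : EuclideanSpace ℝ (Fin d)) (y : Fin d → ℝ) :
    ((Ibox d a ((MeasurableEquiv.toLp 2 (Fin d → ℝ)).symm.symm y) : ℝ) : ℂ) *
      Complex.exp (Complex.I * ((inner ℝ z ((MeasurableEquiv.toLp 2 (Fin d → ℝ)).symm.symm y) : ℝ) : ℂ))
    = ∏ j, fac a (z j) (y j) := by
  have hco : ∀ j, ((MeasurableEquiv.toLp 2 (Fin d → ℝ)).symm.symm y) j = y j := fun j => rfl
  have hinner : (inner ℝ z ((MeasurableEquiv.toLp 2 (Fin d → ℝ)).symm.symm y) : ℝ)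
      = ∑ j, z j * y j := by
    rw [PiLp.inner_apply]
    simp [hco, RCLike.inner_apply, mul_comm]
  unfold fac
  rw [Finset.prod_mul_distrib]
  have hexp : (∏ j, Complex.exp (Complex.I * (z j) * (y j)))
      = Complex.exp (Complex.I * ((∑ j, z j * y j : ℝ) : ℂ)) := by
    rw [← Complex.exp_sum]
    congr 1
    push_cast
    rw [Finset.mul_sum]
    exact Finset.sum_congr rfl (fun j _ => (mul_assoc _ _ _))
  rw [hexp, hinner]
  congr 1
  unfold Ibox
  by_cases h : ∀ j, ((MeasurableEquiv.toLp 2 (Fin d → ℝ)).symm.symm y) j ∈ Set.Icc (0:ℝ) a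
  · rw [if_pos h]
    have : ∀ j ∈ Finset.univ, (if (y j) ∈ Set.Icc (0:ℝ) a then ((a:ℂ))⁻¹ else 0) = (a:ℂ)⁻¹ := by
      intro j _; rw [if_pos (by rw [← hco j]; exact h j)]
    rw [Finset.prod_congr rfl this, Finset.prod_const]
    push_cast
    simp
  · rw [if_neg h]
    push_neg at h
    obtain ⟨j, hj⟩ := h
    rw [hco j] at hj
    rw [Finset.prod_eq_zero (Finset.mem_univ j) (if_neg hj : (if y j ∈ Set.Icc (0:ℝ) a then ((a:ℂ))⁻¹ else 0) = 0)]
    simp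

lemma Ffun_eq_prod (d : ℕ) (a : ℝ) (z : EuclideanSpace ℝ (Fin d)) :
    Ffun d a z = ∏ j, ∫ t : ℝ, fac a (z j) t := by
  unfold Ffun
  rw [← ((EuclideanSpace.volume_preserving_symm_measurableEquiv_toLp (Fin d)).symm).integral_comp
    (MeasurableEquiv.measurableEmbedding _)]
  rw [show (fun y : Fin d → ℝ =>
      ((Ibox d a ((MeasurableEquiv.toLp 2 (Fin d → ℝ)).symm.symm y) : ℝ) : ℂ) *
      Complex.exp (Complex.I * ((inner ℝ z ((MeasurableEquiv.toLp 2 (Fin d → ℝ)).symm.symm y) : ℝ) : ℂ)))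
      = fun y => ∏ j, fac a (z j) (y j) from funext (pointwise_prod d a z)]
  exact MeasureTheory.integral_fintype_prod_eq_prod (fun j t => fac a (z j) t)

lemma boxSet_measurable (d : ℕ) (a : ℝ) :
    MeasurableSet {x : EuclideanSpace ℝ (Fin d) | ∀ j, x j ∈ Set.Icc (0:ℝ) a} := by
  rw [Set.setOf_forall]
  refine MeasurableSet.iInter fun j => ?_
  have hj : Measurable fun x : EuclideanSpace ℝ (Fin d) => x j :=
    (measurable_pi_apply j).comp (MeasurableEquiv.toLp 2 (Fin d → ℝ)).symm.measurable
  exact hj measurableSet_Icc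

lemma measurable_Ibox (d : ℕ) (a : ℝ) : Measurable (Ibox d a) := by
  unfold Ibox
  exact Measurable.ite (boxSet_measurable d a) measurable_const measurable_const

lemma Ibox_nonneg (d : ℕ) (a : ℝ) (ha : 0 < a) (x : EuclideanSpace ℝ (Fin d)) :
    0 ≤ Ibox d a x := by
  unfold Ibox; split <;> positivity

set_option maxHeartbeats 1000000 in
lemma integrable_Ibox (d : ℕ) (a : ℝ) (ha : 0 < a) : Integrable (Ibox d a) := by
  have hEq : Ibox d a = Set.indicator {x : EuclideanSpace ℝ (Fin d) | ∀ j, x j ∈ Set.Icc (0:ℝ) a}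
      (fun _ => (a ^ d)⁻¹) := by
    funext x
    unfold Ibox
    by_cases h : ∀ j, x j ∈ Set.Icc (0:ℝ) a
    · rw [if_pos h, Set.indicator_of_mem (show x ∈ {x : EuclideanSpace ℝ (Fin d) | ∀ j, x j ∈ Set.Icc (0:ℝ) a} from h)]
    · rw [if_neg h, Set.indicator_of_notMem (show x ∉ {x : EuclideanSpace ℝ (Fin d) | ∀ j, x j ∈ Set.Icc (0:ℝ) a} from h)]
  have hvol : volume {x : EuclideanSpace ℝ (Fin d) | ∀ j, x j ∈ Set.Icc (0:ℝ) a} < ⊤ := by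
    have hpre : {x : EuclideanSpace ℝ (Fin d) | ∀ j, x j ∈ Set.Icc (0:ℝ) a}
        = (MeasurableEquiv.toLp 2 (Fin d → ℝ)).symm ⁻¹' (Set.univ.pi fun _ => Set.Icc (0:ℝ) a) := by
      ext x
      simp only [Set.mem_preimage, Set.mem_univ_pi, Set.mem_setOf_eq]
      exact Iff.rfl
    rw [hpre, MeasurePreserving.measure_preimage
      (EuclideanSpace.volume_preserving_symm_measurableEquiv_toLp (Fin d))
      ((MeasurableSet.univ_pi fun _ => measurableSet_Icc).nullMeasurableSet)]
    rw [volume_pi_pi]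
    simp only [Real.volume_Icc, sub_zero, Finset.prod_const]
    exact ENNReal.pow_lt_top ENNReal.ofReal_lt_top
  rw [hEq, integrable_indicator_iff (boxSet_measurable d a)]
  exact integrableOn_const hvol.ne


noncomputable def eF (d : ℕ) (z x : EuclideanSpace ℝ (Fin d)) : ℂ :=
  Complex.exp (Complex.I * ((inner ℝ z x : ℝ) : ℂ))

lemma abs_eF (d : ℕ) (z x : EuclideanSpace ℝ (Fin d)) : ‖eF d z x‖ = 1 :=
  abs_exp_I_mul _

noncomputable def fF (d : ℕ) (m n : ℝ) (z : EuclideanSpace ℝ (Fin d))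
    (x y : EuclideanSpace ℝ (Fin d)) : ℂ :=
  ((Ibox d m (x - y) : ℝ) : ℂ) * ((Ibox d n (-y) : ℝ) : ℂ) * eF d z x

lemma eF_add (d : ℕ) (z x y : EuclideanSpace ℝ (Fin d)) :
    eF d z (x + y) = eF d z x * eF d z y := by
  unfold eF
  rw [← Complex.exp_add]
  congr 1
  rw [inner_add_right]
  push_cast
  ring

lemma step1 (d : ℕ) (m n : ℝ) (z : EuclideanSpace ℝ (Fin d)) :
    psiE d m n z = ∫ x, ∫ y, fF d m n z x y := by
  unfold psiE convE IboxTilde fF eF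
  congr 1
  funext x
  rw [show ((∫ y, Ibox d m (x - y) * Ibox d n (-y) : ℝ) : ℂ)
      = ∫ y, ((Ibox d m (x - y) * Ibox d n (-y) : ℝ) : ℂ) from (integral_ofReal).symm,
    ← MeasureTheory.integral_mul_const]
  congr 1; funext y; push_cast; ring

lemma hint (d : ℕ) (m n : ℝ) (hm : 0 < m) (hn : 0 < n) (z : EuclideanSpace ℝ (Fin d)) :
    Integrable (Function.uncurry (fF d m n z)) ((volume : Measure (EuclideanSpace ℝ (Fin d))).prod volume) := by
  have hIm : Integrable (Ibox d m) := integrable_Ibox d m hm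
  have hIn : Integrable (fun y : EuclideanSpace ℝ (Fin d) => Ibox d n (-y)) :=
    (integrable_Ibox d n hn).comp_neg
  have h0 : Integrable (fun p : EuclideanSpace ℝ (Fin d) × EuclideanSpace ℝ (Fin d) =>
      (ContinuousLinearMap.mul ℝ ℝ) (Ibox d n (-p.2)) (Ibox d m (p.1 - p.2)))
      (volume.prod volume) :=
    hIn.convolution_integrand (ContinuousLinearMap.mul ℝ ℝ) hIm
  have hmeas : AEStronglyMeasurable (Function.uncurry (fF d m n z)) (volume.prod volume) := by
    apply Measurable.aestronglyMeasurable
    unfold Function.uncurry fF eF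
    apply Measurable.mul
    apply Measurable.mul
    · exact Complex.measurable_ofReal.comp
        ((measurable_Ibox d m).comp (measurable_fst.sub measurable_snd))
    · exact Complex.measurable_ofReal.comp
        ((measurable_Ibox d n).comp measurable_snd.neg)
    · apply Continuous.measurable
      apply Complex.continuous_exp.comp
      apply Continuous.mul continuous_const
      exact Complex.continuous_ofReal.comp
        ((continuous_const.inner continuous_fst) :
          Continuous fun p : EuclideanSpace ℝ (Fin d) × EuclideanSpace ℝ (Fin d) => (inner ℝ z p.1 : ℝ))
  apply Integrable.mono' h0.norm hmeas
  filter_upwards with p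
  have : ‖Function.uncurry (fF d m n z) p‖
      = |Ibox d m (p.1 - p.2)| * |Ibox d n (-p.2)| := by
    simp only [Function.uncurry, fF, norm_mul, Complex.norm_real, Real.norm_eq_abs]
    rw [abs_eF, mul_one]
  rw [this]
  simp only [ContinuousLinearMap.mul_apply', norm_mul, Real.norm_eq_abs]
  exact le_of_eq (mul_comm _ _)

lemma step3 (d : ℕ) (m n : ℝ) (z : EuclideanSpace ℝ (Fin d))
    (y : EuclideanSpace ℝ (Fin d)) :
    (∫ x, fF d m n z x y) = ((Ibox d n (-y) : ℝ) : ℂ) * (Ffun d m z * eF d z y) := by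
  unfold fF
  have h1 : (∫ x, ((Ibox d m (x - y) : ℝ):ℂ) * ((Ibox d n (-y) : ℝ):ℂ) * eF d z x)
      = ((Ibox d n (-y) : ℝ):ℂ) * ∫ x, ((Ibox d m (x - y) : ℝ):ℂ) * eF d z x := by
    rw [← MeasureTheory.integral_const_mul]
    congr 1; funext x; ring
  rw [h1]
  congr 1
  have h2 := MeasureTheory.integral_add_right_eq_self
    (μ := (volume : Measure (EuclideanSpace ℝ (Fin d))))
    (fun x => ((Ibox d m (x - y) : ℝ):ℂ) * eF d z x) y
  rw [← h2]
  calc (∫ x, ((Ibox d m (x + y - y) : ℝ):ℂ) * eF d z (x + y))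
      = ∫ x, (((Ibox d m x : ℝ):ℂ) * eF d z x) * eF d z y := by
        congr 1; funext x
        rw [add_sub_cancel_right, eF_add]; ring
    _ = (∫ x, ((Ibox d m x : ℝ):ℂ) * eF d z x) * eF d z y :=
        MeasureTheory.integral_mul_const _ _
    _ = Ffun d m z * eF d z y := rfl

lemma step4 (d : ℕ) (m n : ℝ) (z : EuclideanSpace ℝ (Fin d)) :
    (∫ y, ((Ibox d n (-y) : ℝ) : ℂ) * (Ffun d m z * eF d z y))
      = Ffun d m z * Ffun d n (-z) := by
  have h1 : (∫ y, ((Ibox d n (-y) : ℝ) : ℂ) * (Ffun d m z * eF d z y))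
      = (∫ y, ((Ibox d n (-y) : ℝ) : ℂ) * eF d z y) * Ffun d m z := by
    rw [← MeasureTheory.integral_mul_const]
    congr 1; funext y; ring
  rw [h1, mul_comm]
  congr 1
  have h2 : (∫ y, ((Ibox d n y : ℝ):ℂ) * eF d z (-y))
      = ∫ y, ((Ibox d n (-y) : ℝ):ℂ) * eF d z y := by
    simpa [neg_neg] using MeasureTheory.integral_neg_eq_self
      (μ := (volume : Measure (EuclideanSpace ℝ (Fin d))))
      (fun y => ((Ibox d n (-y) : ℝ) : ℂ) * eF d z y)
  rw [← h2]
  unfold Ffun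
  congr 1
  funext y
  have h3 : (inner ℝ (-z) y : ℝ) = (inner ℝ z (-y) : ℝ) := by
    rw [inner_neg_left, inner_neg_right]
  unfold eF
  rw [h3]

lemma psiE_eq (d : ℕ) (m n : ℝ) (hm : 0 < m) (hn : 0 < n) (z : EuclideanSpace ℝ (Fin d)) :
    psiE d m n z = Ffun d m z * Ffun d n (-z) := by
  rw [step1 d m n z, MeasureTheory.integral_integral_swap (hint d m n hm hn z)]
  calc (∫ y, ∫ x, fF d m n z x y)
      = ∫ y, ((Ibox d n (-y) : ℝ) : ℂ) * (Ffun d m z * eF d z y) := by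
        congr 1; funext y; exact step3 d m n z y
    _ = Ffun d m z * Ffun d n (-z) := step4 d m n z


lemma abs_Ffun_le_one (d : ℕ) (a : ℝ) (ha : 0 < a) (z : EuclideanSpace ℝ (Fin d)) :
    ‖Ffun d a z‖ ≤ 1 := by
  rw [Ffun_eq_prod, Complex.norm_prod]
  calc (∏ j, ‖∫ t : ℝ, fac a (z j) t‖)
      ≤ ∏ j : Fin d, 1 :=
        Finset.prod_le_prod (fun j _ => norm_nonneg _)
          (fun j _ => abs_fac_integral_le_one a (z j) ha)
    _ = 1 := by simp

lemma abs_Ffun_le_decay (d : ℕ) (a : ℝ) (ha : 0 < a) (z : EuclideanSpace ℝ (Fin d))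
    (j : Fin d) (hzj : z j ≠ 0) :
    ‖Ffun d a z‖ ≤ 2 / (a * |z j|) := by
  rw [Ffun_eq_prod, Complex.norm_prod]
  rw [← Finset.mul_prod_erase Finset.univ _ (Finset.mem_univ j)]
  have h1 : (∏ i ∈ Finset.univ.erase j, ‖∫ t : ℝ, fac a (z i) t‖) ≤ 1 :=
    Finset.prod_le_one (fun i _ => norm_nonneg _)
      (fun i _ => abs_fac_integral_le_one a (z i) ha)
  calc ‖∫ t : ℝ, fac a (z j) t‖ *
        ∏ i ∈ Finset.univ.erase j, ‖∫ t : ℝ, fac a (z i) t‖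
      ≤ (2 / (a * |z j|)) * 1 := by
        apply mul_le_mul (abs_fac_integral_le_decay a (z j) ha hzj) h1
          (Finset.prod_nonneg fun i _ => norm_nonneg _) (by positivity)
    _ = 2 / (a * |z j|) := mul_one _

/-- For `d ≥ 1`, `m, n > 0`, there is `C > 0` with
`|ψ_{m,n}(z)| ≤ C min(1, ‖z‖⁻²)` for all `z`, with `min(1, ‖z‖⁻²)` read as `1` at `z = 0`. -/
theorem stmt_7 (d : ℕ) (hd : 1 ≤ d) (m n : ℝ) (hm : 0 < m) (hn : 0 < n) :
    ∃ C > (0 : ℝ), ∀ z : EuclideanSpace ℝ (Fin d),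
      ‖psiE d m n z‖ ≤ C * (if z = 0 then 1 else min 1 ((‖z‖ ^ 2)⁻¹)) := by
  refine ⟨max 1 (4 * d / (m * n)), lt_of_lt_of_le one_pos (le_max_left _ _), fun z => ?_⟩
  set C := max 1 (4 * d / (m * n)) with hC
  have habs : ‖psiE d m n z‖
      = ‖Ffun d m z‖ * ‖Ffun d n (-z)‖ := by
    rw [psiE_eq d m n hm hn z, norm_mul]
  have b1 : ‖psiE d m n z‖ ≤ 1 := by
    rw [habs]
    calc ‖Ffun d m z‖ * ‖Ffun d n (-z)‖
        ≤ 1 * 1 := mul_le_mul (abs_Ffun_le_one d m hm z) (abs_Ffun_le_one d n hn (-z))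
          (norm_nonneg _) (by norm_num)
      _ = 1 := one_mul 1
  by_cases hz : z = 0
  · rw [if_pos hz, mul_one]
    exact b1.trans (le_max_left _ _)
  · rw [if_neg hz]
    -- pick the maximal coordinate
    haveI : Nonempty (Fin d) := ⟨⟨0, hd⟩⟩
    obtain ⟨j0, -, hj0⟩ := Finset.exists_max_image Finset.univ (fun j => |z j|)
      ⟨Classical.arbitrary (Fin d), Finset.mem_univ _⟩
    have hnormsq : ‖z‖ ^ 2 = ∑ i, |z i| ^ 2 := by
      rw [EuclideanSpace.norm_eq]
      rw [Real.sq_sqrt (Finset.sum_nonneg fun i _ => sq_nonneg _)]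
      exact Finset.sum_congr rfl fun i _ => by rw [Real.norm_eq_abs]
    have hj2 : ‖z‖ ^ 2 ≤ d * |z j0| ^ 2 := by
      rw [hnormsq]
      calc (∑ i, |z i| ^ 2) ≤ ∑ i : Fin d, |z j0| ^ 2 :=
            Finset.sum_le_sum fun i _ =>
              pow_le_pow_left₀ (abs_nonneg _) (hj0 i (Finset.mem_univ i)) 2
        _ = d * |z j0| ^ 2 := by
            rw [Finset.sum_const, Finset.card_univ, Fintype.card_fin, nsmul_eq_mul]
    have hzpos : (0:ℝ) < ‖z‖ ^ 2 := by
      have : ‖z‖ ≠ 0 := norm_ne_zero_iff.mpr hz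
      positivity
    have hzj0 : z j0 ≠ 0 := by
      intro h
      rw [h] at hj2
      simp at hj2
      exact hz hj2
    have hnegc : |(-z) j0| = |z j0| := by
      have : (-z) j0 = -(z j0) := rfl
      rw [this, abs_neg]
    have hzj0' : (-z) j0 ≠ 0 := by
      have : (-z) j0 = -(z j0) := rfl
      rw [this]; exact neg_ne_zero.mpr hzj0
    have b2 : ‖psiE d m n z‖ ≤ 4 / ((m * n) * |z j0| ^ 2) := by
      rw [habs]
      calc ‖Ffun d m z‖ * ‖Ffun d n (-z)‖
          ≤ (2 / (m * |z j0|)) * (2 / (n * |z j0|)) := by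
            apply mul_le_mul (abs_Ffun_le_decay d m hm z j0 hzj0) ?_
              (norm_nonneg _) (by positivity)
            have := abs_Ffun_le_decay d n hn (-z) j0 hzj0'
            rwa [hnegc] at this
        _ = 4 / ((m * n) * |z j0| ^ 2) := by
            have h1 : |z j0| ≠ 0 := abs_ne_zero.mpr hzj0
            rw [div_mul_div_comm]
            congr 1
            · norm_num
            · rw [show m * |z j0| * (n * |z j0|) = m * n * (|z j0| * |z j0|) by ring,
                ← sq (|z j0|), sq_abs]
    by_cases hle : ‖z‖ ^ 2 ≤ 1
    · have h1 : (1:ℝ) ≤ (‖z‖ ^ 2)⁻¹ := (one_le_inv₀ hzpos).mpr hle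
      rw [min_eq_left h1, mul_one]
      exact b1.trans (le_max_left _ _)
    · push_neg at hle
      have h1 : (‖z‖ ^ 2)⁻¹ ≤ 1 := by
        rw [inv_le_one_iff₀]; right; exact hle.le
      rw [min_eq_right h1]
      have habsj : (0:ℝ) < |z j0| := abs_pos.mpr hzj0
      have key : 4 / ((m * n) * |z j0| ^ 2) ≤ (4 * d / (m * n)) * (‖z‖ ^ 2)⁻¹ := by
        have hd1 : (1:ℝ) ≤ d := by exact_mod_cast hd
        have hrhs : (4 * (d:ℝ) / (m * n)) * (‖z‖ ^ 2)⁻¹ = (4 * d) / ((m * n) * ‖z‖ ^ 2) := by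
          field_simp
        rw [hrhs, div_le_div_iff₀ (by positivity) (by positivity)]
        nlinarith [mul_le_mul_of_nonneg_left hj2
          (le_of_lt (by positivity : (0:ℝ) < 4 * (m * n)))]
      calc ‖psiE d m n z‖ ≤ 4 / ((m * n) * |z j0| ^ 2) := b2
        _ ≤ (4 * d / (m * n)) * (‖z‖ ^ 2)⁻¹ := key
        _ ≤ C * (‖z‖ ^ 2)⁻¹ := by
            apply mul_le_mul_of_nonneg_right (le_max_right _ _) (by positivity)
end

section
/- For every a > 0 and every N ≥ 1, ∫_0^1 (1/r) · exp(−a(1 − r/N²)/r) dr ≤ log(e + e/a). -/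
open Real MeasureTheory Set Filter Function intervalIntegral
open scoped Topology

private lemma aux_xexp (x : ℝ) : x * Real.exp (-x) ≤ Real.exp (-1) := by
  have h := Real.add_one_le_exp (x - 1)
  have hx : x ≤ Real.exp (x - 1) := by linarith
  calc x * Real.exp (-x) ≤ Real.exp (x - 1) * Real.exp (-x) :=
        mul_le_mul_of_nonneg_right hx (Real.exp_nonneg _)
    _ = Real.exp (-1) := by rw [← Real.exp_add]; ring_nf

/-- For every `a > 0` and `N ≥ 1`,
`∫_0^1 (1/r) exp(-a(1 - r/N²)/r) dr ≤ log (e + e/a)`. -/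
theorem stmt_18 (a N : ℝ) (ha : 0 < a) (hN : 1 ≤ N) :
    (∫ r in Set.Ioo (0 : ℝ) 1, (1 / r) * Real.exp (-a * (1 - r / N ^ 2) / r)) ≤
      Real.log (Real.exp 1 + Real.exp 1 / a) := by
  have ha1 : (0:ℝ) < a + 1 := by linarith
  set h : ℝ → ℝ := fun r => (1 / r) * Real.exp (-a * (1 - r / N ^ 2) / r) with hh
  set b : ℝ := a / (a + 1) with hbdef
  have hb0 : 0 < b := div_pos ha ha1
  have hb1 : b < 1 := (div_lt_one ha1).2 (by linarith)
  have hN0 : (0:ℝ) < N := lt_of_lt_of_le one_pos hN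
  have hN2 : (1:ℝ) ≤ N ^ 2 := by nlinarith
  -- the auxiliary comparison function and its antiderivative
  set g : ℝ → ℝ := fun r => a / r ^ 2 * Real.exp (a - a / r) / (a + 1) with hg
  set F : ℝ → ℝ := fun r => Real.exp (a - a / r) / (a + 1) with hF
  -- key bound: h r ≤ (1/r) * exp (a - a/r) for 0 < r
  have hle : ∀ r : ℝ, 0 < r → h r ≤ (1 / r) * Real.exp (a - a / r) := by
    intro r hr
    have hrw : -a * (1 - r / N ^ 2) / r = a / N ^ 2 - a / r := by
      field_simp
      ring
    have h1 : a / N ^ 2 ≤ a := by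
      calc a / N ^ 2 ≤ a / 1 := by
            apply div_le_div_of_nonneg_left ha.le one_pos hN2
        _ = a := by ring
    simp only [hh, hrw]
    have := Real.exp_le_exp.2 (by linarith : a / N ^ 2 - a / r ≤ a - a / r)
    exact mul_le_mul_of_nonneg_left this (by positivity)
  have hnonneg : ∀ r : ℝ, 0 < r → 0 ≤ h r := by
    intro r hr
    simp only [hh]
    positivity
  -- global bound for integrability
  have hboundM : ∀ r : ℝ, 0 < r → (1 / r) * Real.exp (a - a / r)
      ≤ Real.exp a / a * Real.exp (-1) := by
    intro r hr
    have hrw : (1 / r) * Real.exp (a - a / r)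
        = Real.exp a / a * (a / r * Real.exp (-(a / r))) := by
      rw [show a - a / r = a + (-(a / r)) by ring, Real.exp_add]
      field_simp
    rw [hrw]
    exact mul_le_mul_of_nonneg_left (aux_xexp _) (by positivity)
  -- measurability of h
  have hmeas : Measurable h := by
    apply Measurable.mul
    · exact measurable_const.div measurable_id
    · exact (((measurable_const.sub (measurable_id.div_const _)).const_mul
        (-a)).div measurable_id).exp
  -- integrability of h on (0,1)
  have hint : IntegrableOn h (Ioo (0:ℝ) 1) := by
    apply Measure.integrableOn_of_bounded (M := Real.exp a / a * Real.exp (-1))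
      (by simp) hmeas.aestronglyMeasurable
    filter_upwards [ae_restrict_mem measurableSet_Ioo] with r hr
    rw [Real.norm_eq_abs, abs_of_nonneg (hnonneg r hr.1)]
    exact (hle r hr.1).trans (hboundM r hr.1)
  have hsub1 : Ioo (0:ℝ) b ⊆ Ioo (0:ℝ) 1 := Ioo_subset_Ioo le_rfl hb1.le
  have hsub2 : Ico b (1:ℝ) ⊆ Ioo (0:ℝ) 1 := fun r hr => ⟨lt_of_lt_of_le hb0 hr.1, hr.2⟩
  have hint1 : IntegrableOn h (Ioo (0:ℝ) b) := hint.mono_set hsub1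
  have hint2 : IntegrableOn h (Ico b (1:ℝ)) := hint.mono_set hsub2
  -- split the integral
  have hsplit : (∫ r in Ioo (0:ℝ) 1, h r)
      = (∫ r in Ioo (0:ℝ) b, h r) + ∫ r in Ico b (1:ℝ), h r := by
    rw [← Ioo_union_Ico_eq_Ioo hb0 hb1.le]
    apply setIntegral_union _ measurableSet_Ico hint1 hint2
    exact disjoint_left.2 fun r hr hr' => absurd hr.2 (not_lt.2 hr'.1)
  -- derivative of F
  have hderivF : ∀ x : ℝ, x ≠ 0 → HasDerivAt F (g x) x := by
    intro x hx
    have h1 : HasDerivAt (fun r : ℝ => a - a / r) (a / x ^ 2) x := by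
      have : HasDerivAt (fun r : ℝ => a / r) (a * (-(x ^ 2)⁻¹)) x :=
        (hasDerivAt_inv hx).const_mul a
      have h2 := (hasDerivAt_const x a).sub this
      refine h2.congr_deriv ?_
      ring
    have h3 := (h1.exp).div_const (a + 1)
    refine h3.congr_deriv ?_
    simp only [hg]
    ring
  -- limit of F at 0⁺
  have htend0 : Tendsto F (𝓝[>] (0:ℝ)) (𝓝 0) := by
    have h0 : Tendsto (fun r : ℝ => a * r⁻¹) (𝓝[>] (0:ℝ)) atTop :=
      tendsto_inv_nhdsGT_zero.const_mul_atTop ha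
    have h1 : Tendsto (fun r : ℝ => a - a / r) (𝓝[>] (0:ℝ)) atBot := by
      have h2 := tendsto_atBot_add_const_left (𝓝[>] (0:ℝ)) a
        (tendsto_neg_atTop_atBot.comp h0)
      simpa [sub_eq_add_neg, div_eq_mul_inv, Function.comp] using h2
    have h2 : Tendsto (fun r : ℝ => Real.exp (a - a / r)) (𝓝[>] (0:ℝ)) (𝓝 0) :=
      Real.tendsto_exp_atBot.comp h1
    have h3 := h2.div_const (a + 1)
    simpa using h3
  -- limit of F at b⁻
  have hFb : F b = Real.exp (-1) / (a + 1) := by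
    have : a / b = a + 1 := by
      rw [hbdef]
      field_simp
    simp only [hF, this]
    norm_num
  have htendb : Tendsto F (𝓝[<] b) (𝓝 (Real.exp (-1) / (a + 1))) := by
    rw [← hFb]
    apply Tendsto.mono_left _ nhdsWithin_le_nhds
    exact ((hderivF b hb0.ne').continuousAt).tendsto
  -- continuity of the updated antiderivative, for integrability of g
  set G : ℝ → ℝ := Function.update F 0 0 with hG
  have hGF : ∀ x : ℝ, x ≠ 0 → G x = F x := fun x hx => Function.update_of_ne hx _ _
  have hcontG : ContinuousOn G (Icc 0 b) := by
    intro x hx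
    rcases eq_or_ne x 0 with rfl | hx0
    · rw [hG]
      apply continuousWithinAt_update_same.2
      apply htend0.mono_left
      apply nhdsWithin_mono
      rintro y ⟨hy1, hy2⟩
      exact lt_of_le_of_ne hy1.1 (Ne.symm hy2)
    · have hc : ContinuousAt F x := ((hderivF x hx0).continuousAt)
      apply ContinuousAt.continuousWithinAt
      apply hc.congr
      filter_upwards [eventually_ne_nhds hx0] with y hy
      exact (hGF y hy).symm
  have hderivG : ∀ x ∈ Ioo (0:ℝ) b, HasDerivAt G (g x) x := by
    intro x hx
    apply (hderivF x hx.1.ne').congr_of_eventuallyEq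
    filter_upwards [eventually_ne_nhds hx.1.ne'] with y hy
    exact hGF y hy
  have hgpos : ∀ x ∈ Ioo (0:ℝ) b, 0 ≤ g x := by
    intro x hx
    simp only [hg]
    positivity
  have hintg : IntegrableOn g (Ioc (0:ℝ) b) :=
    intervalIntegral.integrableOn_deriv_of_nonneg hcontG hderivG hgpos
  have hintg' : IntegrableOn g (Ioo (0:ℝ) b) := hintg.mono_set Ioo_subset_Ioc_self
  -- value of ∫ g on (0,b)
  have hgval : (∫ r in Ioo (0:ℝ) b, g r) = Real.exp (-1) / (a + 1) := by
    rw [← integral_Ioc_eq_integral_Ioo, ← intervalIntegral.integral_of_le hb0.le]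
    rw [intervalIntegral.integral_eq_sub_of_hasDerivAt_of_tendsto hb0
      (fun x hx => hderivF x hx.1.ne') _ htend0 htendb]
    · ring
    · exact (intervalIntegrable_iff_integrableOn_Ioc_of_le hb0.le).2 hintg
  -- bound piece 1
  have hpiece1 : (∫ r in Ioo (0:ℝ) b, h r) ≤ Real.exp (-1) / (a + 1) := by
    rw [← hgval]
    apply setIntegral_mono_on hint1 hintg' measurableSet_Ioo
    intro r hr
    have hr0 : 0 < r := hr.1
    have hr2 : (a + 1) * r ≤ a := by
      have := hr.2
      rw [hbdef, lt_div_iff₀ ha1] at this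
      linarith [this]
    have key : (1:ℝ) / r ≤ a / r ^ 2 / (a + 1) := by
      rw [div_div, div_le_div_iff₀ hr0 (by positivity)]
      nlinarith
    calc h r ≤ (1 / r) * Real.exp (a - a / r) := hle r hr0
      _ ≤ (a / r ^ 2 / (a + 1)) * Real.exp (a - a / r) :=
          mul_le_mul_of_nonneg_right key (Real.exp_nonneg _)
      _ = g r := by simp only [hg]; ring
  -- bound piece 2
  have hinv_int : IntegrableOn (fun r : ℝ => 1 / r) (Ico b 1) := by
    apply (ContinuousOn.integrableOn_Icc _).mono_set Ico_subset_Icc_self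
    apply continuousOn_const.div continuousOn_id
    intro x hx
    exact ne_of_gt (lt_of_lt_of_le hb0 hx.1)
  have hpiece2 : (∫ r in Ico b (1:ℝ), h r) ≤ Real.log ((a + 1) / a) := by
    have hstep : (∫ r in Ico b (1:ℝ), h r) ≤ ∫ r in Ico b (1:ℝ), 1 / r := by
      apply setIntegral_mono_on hint2 hinv_int measurableSet_Ico
      intro r hr
      have hr0 : 0 < r := lt_of_lt_of_le hb0 hr.1
      have hr1 : r ≤ 1 := hr.2.le
      have hexp_le : -a * (1 - r / N ^ 2) / r ≤ 0 := by
        apply div_nonpos_of_nonpos_of_nonneg _ hr0.le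
        have : r / N ^ 2 ≤ 1 := by
          rw [div_le_one (by positivity)]
          linarith
        nlinarith
      have := Real.exp_le_one_iff.2 hexp_le
      calc h r = (1 / r) * Real.exp (-a * (1 - r / N ^ 2) / r) := rfl
        _ ≤ (1 / r) * 1 := mul_le_mul_of_nonneg_left this (by positivity)
        _ = 1 / r := by ring
    refine hstep.trans_eq ?_
    rw [integral_Ico_eq_integral_Ioo, ← integral_Ioc_eq_integral_Ioo,
      ← intervalIntegral.integral_of_le hb1.le]
    rw [integral_one_div]
    · congr 1
      rw [hbdef]
      rw [one_div_div]
    · intro hmem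
      rw [Set.uIcc_of_le hb1.le] at hmem
      exact absurd hmem.1 (not_le.2 hb0)
  -- put everything together
  have hfinal : Real.exp (-1) / (a + 1) + Real.log ((a + 1) / a)
      ≤ Real.log (Real.exp 1 + Real.exp 1 / a) := by
    have h1 : Real.exp 1 + Real.exp 1 / a = Real.exp 1 * ((a + 1) / a) := by
      field_simp
    rw [h1, Real.log_mul (Real.exp_ne_zero 1) (by positivity), Real.log_exp]
    have h2 : Real.exp (-1) / (a + 1) ≤ 1 := by
      rw [div_le_one ha1]
      have := Real.exp_le_exp.2 (by norm_num : (-1:ℝ) ≤ 0)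
      rw [Real.exp_zero] at this
      linarith
    linarith
  calc (∫ r in Ioo (0:ℝ) 1, h r)
      = (∫ r in Ioo (0:ℝ) b, h r) + ∫ r in Ico b (1:ℝ), h r := hsplit
    _ ≤ Real.exp (-1) / (a + 1) + Real.log ((a + 1) / a) := add_le_add hpiece1 hpiece2
    _ ≤ Real.log (Real.exp 1 + Real.exp 1 / a) := hfinal
end

section
/- For all m, n > 0 (in dimension d = 1), ∫_ℝ ψ_{m,n}(z) dz = 2π / max(m, n), where the integral is a convergent complex-valued Lebesgue integral over ℝ. -/
open MeasureTheory
open scoped Classical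

/-- `I_m(x) = m⁻¹ 1_{[0,m]}(x)` (dimension one). -/
noncomputable def I1 (m x : ℝ) : ℝ :=
  if x ∈ Set.Icc (0 : ℝ) m then m⁻¹ else 0

/-- Convolution on `ℝ` with respect to Lebesgue measure. -/
noncomputable def conv1 (g h : ℝ → ℝ) (x : ℝ) : ℝ :=
  ∫ y, g (x - y) * h y

/-- `ψ_{m,n}(z) = ∫_ℝ (I_m ⋆ Ĩ_n)(x) e^{izx} dx` where `Ĩ_n(x) = I_n(-x)`. -/
noncomputable def psi1 (m n z : ℝ) : ℂ :=
  ∫ x : ℝ, (conv1 (I1 m) (fun y => I1 n (-y)) x : ℂ) * Complex.exp (Complex.I * z * x)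

open FourierTransform

namespace Stmt19Aux

noncomputable def A (m z : ℝ) : ℂ := ∫ x, (I1 m x : ℂ) * Complex.exp (Complex.I * z * x)

noncomputable def Fmn (m n : ℝ) (x : ℝ) : ℝ := (m⁻¹ * n⁻¹) * max (min x 0 - max (x - m) (-n)) 0

lemma integrable_I1_mul_exp (m z : ℝ) :
    Integrable (fun x => (I1 m x : ℂ) * Complex.exp (Complex.I * z * x)) := by
  have h : (fun x => (I1 m x : ℂ) * Complex.exp (Complex.I * z * x))
      = fun x => (Set.Icc (0:ℝ) m).indicator
          (fun x => ((m⁻¹ : ℝ) : ℂ) * Complex.exp (Complex.I * z * x)) x := by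
    funext x
    simp only [I1, Set.indicator_apply]
    split_ifs <;> simp
  rw [h, integrable_indicator_iff measurableSet_Icc]
  exact (ContinuousOn.integrableOn_compact isCompact_Icc (by fun_prop))

lemma integral_I1 {m : ℝ} (hm : 0 < m) : ∫ x, I1 m x = 1 := by
  have h : I1 m = fun x => (Set.Icc (0:ℝ) m).indicator (fun _ => m⁻¹) x := by
    funext x; simp [I1, Set.indicator_apply]
  rw [h]
  rw [integral_indicator_const _ measurableSet_Icc, Real.volume_real_Icc_of_le hm.le, smul_eq_mul, sub_zero]
  field_simp

lemma norm_I1_mul_exp (m z : ℝ) (x : ℝ) :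
    ‖(I1 m x : ℂ) * Complex.exp (Complex.I * z * x)‖ = I1 m x := by
  rw [norm_mul]
  have h : (Complex.I * z * x) = ((z * x : ℝ) : ℂ) * Complex.I := by push_cast; ring
  rw [h]
  rw [Complex.norm_exp_ofReal_mul_I, mul_one,
    Complex.norm_real, Real.norm_eq_abs]
  apply _root_.abs_of_nonneg
  simp only [I1]
  split_ifs with h
  · exact inv_nonneg.2 (le_trans h.1 h.2)
  · exact le_refl 0

lemma norm_A_le_one {m : ℝ} (hm : 0 < m) (z : ℝ) : ‖A m z‖ ≤ 1 := by
  calc ‖A m z‖ ≤ ∫ x, ‖(I1 m x : ℂ) * Complex.exp (Complex.I * z * x)‖ :=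
      norm_integral_le_integral_norm _
    _ = ∫ x, I1 m x := by simp_rw [norm_I1_mul_exp]
    _ = 1 := integral_I1 hm

lemma A_eq {m : ℝ} (hm : 0 < m) {z : ℝ} (hz : z ≠ 0) :
    A m z = (m : ℂ)⁻¹ * ((Complex.exp (Complex.I * z * m) - 1) / (Complex.I * z)) := by
  have h : (fun x => (I1 m x : ℂ) * Complex.exp (Complex.I * z * x))
      = fun x => (Set.Icc (0:ℝ) m).indicator
          (fun x => ((m⁻¹ : ℝ) : ℂ) * Complex.exp (Complex.I * z * x)) x := by
    funext x
    simp only [I1, Set.indicator_apply]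
    split_ifs <;> simp
  have hIz : (Complex.I * (z:ℂ)) ≠ 0 := by
    simp [Complex.I_ne_zero, hz]
  rw [A, h, integral_indicator measurableSet_Icc, integral_Icc_eq_integral_Ioc,
    ← intervalIntegral.integral_of_le hm.le, intervalIntegral.integral_const_mul,
    integral_exp_mul_complex hIz]
  push_cast
  rw [mul_zero, Complex.exp_zero]

lemma norm_A_le {m : ℝ} (hm : 0 < m) {z : ℝ} (hz : z ≠ 0) : ‖A m z‖ ≤ 2 / (m * |z|) := by
  rw [A_eq hm hz]
  have h1 : ‖Complex.exp (Complex.I * z * m) - 1‖ ≤ 2 := by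
    calc ‖Complex.exp (Complex.I * z * m) - 1‖
        ≤ ‖Complex.exp (Complex.I * z * m)‖ + ‖(1:ℂ)‖ := norm_sub_le _ _
      _ ≤ 2 := by
        have h : (Complex.I * z * m) = ((z * m : ℝ) : ℂ) * Complex.I := by push_cast; ring
        rw [h, Complex.norm_exp_ofReal_mul_I, norm_one]; norm_num
  have h2 : ‖(m:ℂ)⁻¹‖ = m⁻¹ := by
    rw [norm_inv, Complex.norm_real, Real.norm_eq_abs, abs_of_pos hm]
  have h3 : ‖Complex.I * (z:ℂ)‖ = |z| := by
    rw [norm_mul, Complex.norm_I, one_mul, Complex.norm_real, Real.norm_eq_abs]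
  rw [norm_mul, norm_div, h2, h3]
  calc m⁻¹ * (‖Complex.exp (Complex.I * z * m) - 1‖ / |z|) ≤ m⁻¹ * (2 / |z|) := by
        gcongr
    _ = 2 / (m * |z|) := by
        rw [div_eq_mul_inv, div_eq_mul_inv, mul_inv]
        ring

lemma psi_factor {m n : ℝ} (hm : 0 < m) (hn : 0 < n) (z : ℝ) :
    psi1 m n z = A n (-z) * A m z := by
  classical
  set G : ℝ → ℂ := fun x => (I1 m x : ℂ) * Complex.exp (Complex.I * z * x) with hGdef
  set H : ℝ → ℂ := fun y => (I1 n (-y) : ℂ) * Complex.exp (Complex.I * z * y) with hHdef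
  have hG : Integrable G := integrable_I1_mul_exp m z
  have hH : Integrable H := by
    have hθ := integrable_I1_mul_exp n (-z)
    have he : H = fun y =>
        (fun t => (I1 n t : ℂ) * Complex.exp (Complex.I * (-z : ℝ) * t)) ((-1) * y) := by
      funext y
      simp only [hHdef, neg_one_mul]
      congr 1
      push_cast
      ring_nf
    rw [he]
    exact hθ.comp_mul_left' (by norm_num)
  have key : ∀ x : ℝ, MeasureTheory.convolution H G (ContinuousLinearMap.mul ℂ ℂ) volume x
      = (conv1 (I1 m) (fun y => I1 n (-y)) x : ℂ) * Complex.exp (Complex.I * z * x) := by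
    intro x
    rw [MeasureTheory.convolution_def]
    have h1 : ∀ t : ℝ, (ContinuousLinearMap.mul ℂ ℂ) (H t) (G (x - t))
        = ((I1 m (x - t) * I1 n (-t) : ℝ) : ℂ) * Complex.exp (Complex.I * z * x) := by
      intro t
      simp only [ContinuousLinearMap.mul_apply', hGdef, hHdef]
      rw [show ((Complex.I * z * x : ℂ)) = (Complex.I * z * t) + (Complex.I * z * ((x : ℝ) - t : ℝ)) by
        push_cast; ring, Complex.exp_add]
      push_cast
      ring
    simp_rw [h1]
    rw [integral_mul_const]
    congr 1
    rw [conv1]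
    exact integral_ofReal
  have h2 : psi1 m n z
      = ∫ x, MeasureTheory.convolution H G (ContinuousLinearMap.mul ℂ ℂ) volume x := by
    rw [psi1]
    exact (integral_congr_ae (Filter.EventuallyEq.of_eq (funext fun x => (key x).symm)))
  rw [h2, MeasureTheory.integral_convolution _ hH hG, ContinuousLinearMap.mul_apply']
  have hHA : (∫ y, H y) = A n (-z) := by
    rw [show (∫ y, H y) = ∫ y, H (-y) from (integral_neg_eq_self H volume).symm, A]
    congr 1
    funext y
    simp only [hHdef, neg_neg]
    congr 1
    push_cast
    ring
  rw [hHA]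
  congr 1

lemma conv1_eq {m n : ℝ} (hm : 0 < m) (hn : 0 < n) :
    conv1 (I1 m) (fun y => I1 n (-y)) = Fmn m n := by
  funext x
  have h1 : ∀ y : ℝ, I1 m (x - y) * I1 n (-y)
      = (Set.Icc (max (x - m) (-n)) (min x 0)).indicator (fun _ => m⁻¹ * n⁻¹) y := by
    intro y
    simp only [I1, Set.indicator_apply, Set.mem_Icc, max_le_iff, le_min_iff]
    split_ifs with h1 h2 h3 h3 h2 h3 h3
    · ring
    · exact absurd ⟨⟨by linarith [h1.2], by linarith [h2.2]⟩, by linarith [h1.1],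
        by linarith [h2.1]⟩ h3
    · exact absurd ⟨by linarith [h3.2.2], by linarith [h3.1.2]⟩ h2
    · ring
    · exact absurd ⟨by linarith [h3.2.1], by linarith [h3.1.1]⟩ h1
    · ring
    · exact absurd ⟨by linarith [h3.2.2], by linarith [h3.1.2]⟩ h2
    · ring
  rw [conv1]
  simp only [h1]
  rw [integral_indicator_const _ measurableSet_Icc, Real.volume_real_Icc, smul_eq_mul]
  rw [Fmn]
  ring

lemma continuous_Fmn (m n : ℝ) : Continuous (Fmn m n) := by
  unfold Fmn; fun_prop

lemma Fmn_zero_outside {m n : ℝ} (hm : 0 < m) (hn : 0 < n) :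
    ∀ x ∉ Set.Icc (-n) m, Fmn m n x = 0 := by
  intro x hx
  simp only [Set.mem_Icc, not_and_or, not_le] at hx
  have h : min x 0 - max (x - m) (-n) ≤ 0 := by
    rcases hx with h | h
    · linarith [min_le_left x 0, le_max_right (x - m) (-n)]
    · linarith [min_le_right x 0, le_max_left (x - m) (-n)]
  rw [Fmn, max_eq_right h, mul_zero]

end Stmt19Aux

open Stmt19Aux

/-- For all `m, n > 0` (dimension one), `∫_ℝ ψ_{m,n}(z) dz = 2π / max m n`. -/
theorem stmt_19 (m n : ℝ) (hm : 0 < m) (hn : 0 < n) :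
    (∫ z : ℝ, psi1 m n z) = ((2 * Real.pi / max m n : ℝ) : ℂ) := by
  have hπ : (0:ℝ) < 2 * Real.pi := by positivity
  set g : ℝ → ℂ := fun x => ((Fmn m n x : ℝ) : ℂ) with hgdef
  have hgc : Continuous g := Complex.continuous_ofReal.comp (continuous_Fmn m n)
  have hgsupp : HasCompactSupport g := by
    apply HasCompactSupport.intro (isCompact_Icc (a := -n) (b := m))
    intro x hx
    simp only [hgdef, Fmn_zero_outside hm hn x hx, Complex.ofReal_zero]
  have hgint : Integrable g := hgc.integrable_of_hasCompactSupport hgsupp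
  -- relation between psi1 and the inverse Fourier transform of g
  have hpsiF : ∀ z : ℝ, psi1 m n z = 𝓕⁻ g (z / (2 * Real.pi)) := by
    intro z
    rw [Real.fourierInv_eq', psi1, conv1_eq hm hn]
    apply integral_congr_ae
    apply Filter.EventuallyEq.of_eq
    funext v
    rw [smul_eq_mul, mul_comm]
    congr 1
    have hinner : (inner ℝ v (z / (2 * Real.pi)) : ℝ) = v * (z / (2 * Real.pi)) := by
      simp [RCLike.inner_apply, mul_comm]
    rw [hinner]
    have h2 : 2 * Real.pi * (v * (z / (2 * Real.pi))) = z * v := by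
      field_simp
    rw [h2]
    congr 1
    push_cast
    ring
  -- continuity of psi1
  have hpsic : Continuous (fun z => psi1 m n z) := by
    have hc1 : Continuous (𝓕⁻ g) := by
      apply VectorFourier.fourierIntegral_continuous Real.continuous_fourierChar ?_ hgint
      have : Continuous fun p : ℝ × ℝ => -(p.1 * p.2) := by fun_prop
      convert this using 2
      simp [mul_comm]
    have : (fun z => psi1 m n z) = fun z => 𝓕⁻ g (z / (2 * Real.pi)) := funext hpsiF
    rw [this]
    fun_prop
  -- integrability of psi1
  have hint_psi : Integrable (fun z => psi1 m n z) := by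
    obtain ⟨C, hCdef⟩ : ∃ C : ℝ, C = 1 + 4 * (m⁻¹ * n⁻¹) := ⟨_, rfl⟩
    have hC1 : (1:ℝ) ≤ C := by
      rw [hCdef]
      have : 0 < 4 * (m⁻¹ * n⁻¹) := by positivity
      linarith
    refine Integrable.mono' ((integrable_inv_one_add_sq).const_mul C)
      hpsic.aestronglyMeasurable ?_
    have h0 : (volume ({(0:ℝ)} : Set ℝ)) = 0 := Real.volume_singleton
    filter_upwards [compl_mem_ae_iff.2 h0] with z hz
    have hz0 : z ≠ 0 := by simpa using hz
    have hz0' : -z ≠ 0 := neg_ne_zero.2 hz0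
    have habs : |(-z)| = |z| := abs_neg z
    have hb1 : ‖A n (-z)‖ ≤ 1 := norm_A_le_one hn (-z)
    have hb2 : ‖A m z‖ ≤ 1 := norm_A_le_one hm z
    have hb3 : ‖A n (-z)‖ ≤ 2 / (n * |z|) := by
      have := norm_A_le hn hz0'
      rwa [habs] at this
    have hb4 : ‖A m z‖ ≤ 2 / (m * |z|) := norm_A_le hm hz0
    have hP : ‖psi1 m n z‖ = ‖A n (-z)‖ * ‖A m z‖ := by
      rw [psi_factor hm hn z, norm_mul]
    have hzsq : (0:ℝ) < z ^ 2 := by positivity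
    have h1z : (0:ℝ) < 1 + z ^ 2 := by positivity
    have hP1 : ‖psi1 m n z‖ ≤ 1 := by
      rw [hP]
      calc ‖A n (-z)‖ * ‖A m z‖ ≤ 1 * 1 := by
            exact mul_le_mul hb1 hb2 (norm_nonneg _) zero_le_one
        _ = 1 := one_mul 1
    have hP2 : ‖psi1 m n z‖ ≤ 4 * (m⁻¹ * n⁻¹) / z ^ 2 := by
      rw [hP]
      calc ‖A n (-z)‖ * ‖A m z‖ ≤ (2 / (n * |z|)) * (2 / (m * |z|)) := by
            apply mul_le_mul hb3 hb4 (norm_nonneg _)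
            positivity
        _ = 4 * (m⁻¹ * n⁻¹) / z ^ 2 := by
            rw [div_mul_div_comm]
            rw [show (n * |z|) * (m * |z|) = (n * m) * (|z| * |z|) by ring, abs_mul_abs_self z]
            rw [sq]
            field_simp
            ring
    rcases le_or_gt (z ^ 2) (4 * (m⁻¹ * n⁻¹)) with h | h
    · calc ‖psi1 m n z‖ ≤ 1 := hP1
        _ = (1 + z ^ 2) * (1 + z ^ 2)⁻¹ := (mul_inv_cancel₀ (ne_of_gt h1z)).symm
        _ ≤ C * (1 + z ^ 2)⁻¹ := by
            apply mul_le_mul_of_nonneg_right _ (by positivity)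
            rw [hCdef]; linarith
    · calc ‖psi1 m n z‖ ≤ 4 * (m⁻¹ * n⁻¹) / z ^ 2 := hP2
        _ ≤ C / (1 + z ^ 2) := by
            rw [div_le_div_iff₀ hzsq h1z, hCdef]
            nlinarith [h.le]
        _ = C * (1 + z ^ 2)⁻¹ := div_eq_mul_inv C _
  -- integrability of the Fourier transform of g
  have h𝓕g : Integrable (𝓕 g) := by
    have heq : 𝓕 g = fun ξ => psi1 m n ((-(2 * Real.pi)) * ξ) := by
      funext ξ
      rw [hpsiF ((-(2 * Real.pi)) * ξ)]
      rw [show ((-(2 * Real.pi)) * ξ) / (2 * Real.pi) = -ξ by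
        rw [div_eq_iff (ne_of_gt hπ)]; ring]
      rw [Real.fourierInv_eq_fourier_neg, neg_neg]
    rw [heq]
    exact hint_psi.comp_mul_left' (neg_ne_zero.2 (ne_of_gt hπ))
  -- assembly
  calc (∫ z : ℝ, psi1 m n z) = ∫ z : ℝ, 𝓕⁻ g (z / (2 * Real.pi)) := by
        simp_rw [hpsiF]
    _ = |2 * Real.pi| • ∫ w, 𝓕⁻ g w := Measure.integral_comp_div (𝓕⁻ g) (2 * Real.pi)
    _ = (2 * Real.pi) • 𝓕 (𝓕⁻ g) 0 := by
        rw [abs_of_pos hπ]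
        congr 1
        rw [Real.fourier_eq]
        simp
    _ = (2 * Real.pi) • g 0 := by
        rw [hgint.fourier_fourierInv_eq h𝓕g hgc.continuousAt]
    _ = ((2 * Real.pi / max m n : ℝ) : ℂ) := by
        have hF0 : Fmn m n 0 = (max m n)⁻¹ := by
          rw [Fmn]
          rcases le_total m n with h | h
          · rw [max_eq_right h]
            have h1 : min (0:ℝ) 0 = 0 := min_self 0
            have h2 : max ((0:ℝ) - m) (-n) = -m := by
              rw [max_eq_left (by linarith)]
              ring_nf
            rw [h1, h2]
            rw [max_eq_left (by linarith)]
            field_simp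
            ring
          · rw [max_eq_left h]
            have h1 : min (0:ℝ) 0 = 0 := min_self 0
            have h2 : max ((0:ℝ) - m) (-n) = -n := by
              rw [max_eq_right (by linarith)]
            rw [h1, h2]
            rw [max_eq_left (by linarith)]
            field_simp
            ring
        simp only [hgdef, hF0]
        rw [Complex.real_smul]
        push_cast
        rw [div_eq_mul_inv]
end
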